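/- arXiv:2210.03104 — 6 statements merged into one kernel-verified Lean document; each statement's English description precedes it below -/
import Mathlib

section
/- Let q be a task distribution on 𝒮 with q(g) > 0 for all g, and set Z = ∑_{g∈𝒮} √(q(g)). Then the meta-policy π_q*(g) = √(q(g))/Z minimizes regret on q: for every meta-policy π with π(g) > 0 for all g, Regret(π, q) ≥ Regret(π_q*, q), with equality if and only if π = π_q*. -/
/-!
With `a g = √(q g)` the regret is `∑ a g ^ 2 / π g`, and since `∑ π g = 1` it splits as
`(∑ a g) ^ 2 + ∑ (a g - Z * π g) ^ 2 / π g` with `Z = ∑ a g`. The first term is the regret of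
`π_q*`, and the remainder is a sum of nonnegative terms that vanishes exactly when
`π g = a g / Z` for every `g`.
-/

open Finset

namespace Finset

variable {ι R : Type*} (s : Finset ι)

theorem sum_sq_div_eq_sq_sum_add [Field R] (a : ι → R) {p : ι → R}
    (hp : ∀ i ∈ s, p i ≠ 0) (hp1 : ∑ i ∈ s, p i = 1) :
    ∑ i ∈ s, a i ^ 2 / p i =
      (∑ i ∈ s, a i) ^ 2 + ∑ i ∈ s, (a i - (∑ j ∈ s, a j) * p i) ^ 2 / p i := by
  set A := ∑ j ∈ s, a j
  have hterm : ∀ i ∈ s,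
      (a i - A * p i) ^ 2 / p i = a i ^ 2 / p i - 2 * A * a i + A ^ 2 * p i := by
    intro i hi
    field_simp [hp i hi]
    ring
  rw [sum_congr rfl hterm, sum_add_distrib, sum_sub_distrib, ← mul_sum, ← mul_sum, hp1]
  ring

theorem sum_sq_div_eq_sq_sum_iff [Field R] [LinearOrder R] [IsStrictOrderedRing R]
    (a : ι → R) {p : ι → R} (hp : ∀ i ∈ s, 0 < p i) (hp1 : ∑ i ∈ s, p i = 1) :
    ∑ i ∈ s, a i ^ 2 / p i = (∑ i ∈ s, a i) ^ 2 ↔ ∀ i ∈ s, a i = (∑ j ∈ s, a j) * p i := by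
  have hrem : ∀ i ∈ s, 0 ≤ (a i - (∑ j ∈ s, a j) * p i) ^ 2 / p i :=
    fun i hi => div_nonneg (sq_nonneg _) (hp i hi).le
  rw [sum_sq_div_eq_sq_sum_add s a (fun i hi => (hp i hi).ne') hp1, add_eq_left,
    sum_eq_zero_iff_of_nonneg hrem]
  refine forall₂_congr fun i hi => ?_
  rw [div_eq_zero_iff, or_iff_left (hp i hi).ne', sq_eq_zero_iff, sub_eq_zero]

end Finset

theorem stmt_2_general {S : Type*} [Fintype S]
    (q : S → ℝ) (hq0 : ∀ g, 0 < q g)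
    (Z : ℝ) (hZ : Z = ∑ g, Real.sqrt (q g))
    (πstar : S → ℝ) (hπstar : ∀ g, πstar g = Real.sqrt (q g) / Z)
    (π : S → ℝ) (hπpos : ∀ g, 0 < π g) (hπ1 : ∑ g, π g = 1) :
    ∑ g, q g / πstar g ≤ ∑ g, q g / π g ∧
      (∑ g, q g / π g = ∑ g, q g / πstar g ↔ π = πstar) := by
  have hregret : ∑ g, q g / π g = ∑ g, Real.sqrt (q g) ^ 2 / π g := by
    simp only [Real.sq_sqrt (hq0 _).le]
  have hstar : ∑ g, q g / πstar g = Z ^ 2 := by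
    have hterm : ∀ g, q g / πstar g = Z * Real.sqrt (q g) := fun g => by
      rw [hπstar, div_div_eq_mul_div, mul_comm, mul_div_assoc, Real.div_sqrt]
    rw [sum_congr rfl fun g _ => hterm g, ← mul_sum, ← hZ, sq]
  have hpos : ∀ g ∈ univ, 0 < π g := fun g _ => hπpos g
  refine ⟨?_, ⟨fun h => ?_, fun h => h ▸ rfl⟩⟩
  · simpa [hstar, hregret, hπ1, hZ] using sq_sum_div_le_sum_sq_div univ _ hpos
  · rw [hstar, hregret, hZ, sum_sq_div_eq_sq_sum_iff univ _ hpos hπ1, ← hZ] at h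
    funext g
    have hg := h g (mem_univ g)
    have hZ0 : Z ≠ 0 := by
      rintro rfl
      exact (Real.sqrt_pos.mpr (hq0 g)).ne' (by simpa using hg)
    rw [hπstar, hg, mul_div_cancel_left₀ _ hZ0]

/-- The meta-policy `π_q* g = √(q g) / Z`, `Z = ∑ √(q g)`, minimizes regret on `q`:
every positive meta-policy `π` has at least as much regret, with equality iff `π = π_q*`. -/
theorem stmt_2 {S : Type*} [Fintype S] [Nonempty S]
    (q : S → ℝ) (hq0 : ∀ g, 0 < q g) (hq1 : ∑ g, q g = 1)
    (Z : ℝ) (hZ : Z = ∑ g, Real.sqrt (q g))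
    (πstar : S → ℝ) (hπstar : ∀ g, πstar g = Real.sqrt (q g) / Z)
    (π : S → ℝ) (hπpos : ∀ g, 0 < π g) (hπ1 : ∑ g, π g = 1) :
    ∑ g, q g / πstar g ≤ ∑ g, q g / π g ∧
      (∑ g, q g / π g = ∑ g, q g / πstar g ↔ π = πstar) :=
  stmt_2_general q hq0 Z hZ πstar hπstar π hπpos hπ1
end

section
/- Suppose 0 < ε̄ < 1. For every task distribution q' with D_TV(p_D, q') ≤ ε, the regret of the ε-robust meta-policy π^ε on q' is at most its regret on q^ε: Regret(π^ε, q') ≤ Regret(π^ε, q^ε). That is, q^ε is a worst-case task distribution for π^ε within the total-variation ball of radius ε around p_D. -/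
/-!
The ε-robust policy `π^ε` takes one value `a` on `𝒮₀` and one value `b` on `𝒮₁`, so its regret
on a task distribution `q` depends only on the mass `t = q(𝒮₁)`, affinely:
`(1 - t) / a + t / b`, with `t = ε̄` for `q^ε`.
Since `ε̄ ≤ |𝒮₁| / |𝒮|` we have `b ≤ a`, so the regret is nondecreasing in `t`. If `ε̄ = ε + β`,
the total-variation constraint gives `t ≤ β + ε = ε̄`; otherwise `ε̄ = |𝒮₁| / |𝒮|`, the policy is
uniform, and the regret does not depend on `q` at all.
-/

open Finset

lemma Finset.sum_div_ite_mem {K ι : Type*} [DivisionSemiring K] [Fintype ι] [DecidableEq ι]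
    (s : Finset ι) (f : ι → K) (a b : K) :
    ∑ i, f i / (if i ∈ s then a else b) = (∑ i ∈ s, f i) / a + (∑ i ∈ sᶜ, f i) / b := by
  rw [← sum_add_sum_compl s, sum_div, sum_div]
  congr 1 <;> refine sum_congr rfl fun i hi => ?_
  · rw [if_pos hi]
  · rw [if_neg (mem_compl.mp hi)]

lemma Finset.sum_eq_of_forall_eq_div_card {K ι : Type*} [Semifield K] [CharZero K]
    {s : Finset ι} (hs : s.Nonempty) {f : ι → K} {x : K} (h : ∀ i ∈ s, f i = x / #s) :
    ∑ i ∈ s, f i = x := by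
  rw [sum_congr rfl h, sum_const, nsmul_eq_mul, mul_div_cancel₀]
  exact_mod_cast hs.card_pos.ne'

lemma Finset.sum_eq_and_sum_compl_eq_of_eq_ite {K ι : Type*} [Semifield K] [CharZero K]
    [Fintype ι] [DecidableEq ι] {s : Finset ι} (hs : s.Nonempty) (hsc : sᶜ.Nonempty)
    {f : ι → K} {x y : K} (hf : ∀ i, f i = if i ∈ s then x / #s else y / #sᶜ) :
    ∑ i ∈ s, f i = x ∧ ∑ i ∈ sᶜ, f i = y :=
  ⟨sum_eq_of_forall_eq_div_card hs fun i hi => by rw [hf, if_pos hi],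
    sum_eq_of_forall_eq_div_card hsc fun i hi => by rw [hf, if_neg (mem_compl.mp hi)]⟩

lemma Finset.sum_le_sum_add_half_sum_abs_sub {K ι : Type*} [Field K] [LinearOrder K]
    [IsStrictOrderedRing K] [Fintype ι] [DecidableEq ι] (s : Finset ι) {p q : ι → K}
    (h : ∑ i, p i = ∑ i, q i) : ∑ i ∈ s, q i ≤ ∑ i ∈ s, p i + 1 / 2 * ∑ i, |p i - q i| := by
  have hs : ∑ i ∈ s, (q i - p i) ≤ ∑ i ∈ s, |p i - q i| :=
    sum_le_sum fun i _ => (le_abs_self _).trans (abs_sub_comm _ _).le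
  have hsc : ∑ i ∈ sᶜ, (p i - q i) ≤ ∑ i ∈ sᶜ, |p i - q i| :=
    sum_le_sum fun i _ => le_abs_self _
  rw [← sum_add_sum_compl s p, ← sum_add_sum_compl s q] at h
  rw [← sum_add_sum_compl s (fun i => |p i - q i|)]
  simp only [sum_sub_distrib] at hs hsc
  linarith

lemma sub_div_add_div_le_sub_div_add_div {K : Type*} [Field K] [LinearOrder K]
    [IsStrictOrderedRing K] {a b t e : K} (hb : 0 < b) (hba : b ≤ a) (h : t ≤ e ∨ a = b) :
    (1 - t) / a + t / b ≤ (1 - e) / a + e / b := by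
  rcases h with hte | rfl
  · have hinv : 1 / a ≤ 1 / b := one_div_le_one_div_of_le hb hba
    have key : 0 ≤ (e - t) * (1 / b - 1 / a) := mul_nonneg (by linarith) (by linarith)
    linarith [show (1 - e) / a + e / b - ((1 - t) / a + t / b) = (e - t) * (1 / b - 1 / a) by ring]
  · exact le_of_eq (by ring)

lemma div_le_one_sub_div_iff {K : Type*} [Field K] [LinearOrder K] [IsStrictOrderedRing K]
    {m n e : K} (hm : 0 < m) (hn : 0 < n) : e / n ≤ (1 - e) / m ↔ e ≤ n / (m + n) := by
  rw [div_le_div_iff₀ hn hm, le_div_iff₀ (add_pos hm hn)]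
  constructor <;> intro h <;> linarith

lemma one_sub_div_add_div_div_eq {K : Type*} [Field K] {m n : K} (hm : m ≠ 0) (hn : n ≠ 0)
    (hmn : m + n ≠ 0) : (1 - n / (m + n)) / m = n / (m + n) / n := by
  field_simp
  ring

theorem stmt_7_general {S : Type*} [Fintype S] [DecidableEq S]
    (S0 : Finset S) (hS0 : S0.Nonempty) (hS1 : S0ᶜ.Nonempty)
    (β ε : ℝ)
    (εbar : ℝ) (hεbar : εbar = min (ε + β) ((S0ᶜ.card : ℝ) / Fintype.card S))
    (hpos : 0 < εbar)
    (pD qε : S → ℝ)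
    (hpD : ∀ g, pD g = if g ∈ S0 then (1 - β) / S0.card else β / S0ᶜ.card)
    (hqε : ∀ g, qε g = if g ∈ S0 then (1 - εbar) / S0.card else εbar / S0ᶜ.card)
    (Z : ℝ) (hZ : Z = Real.sqrt ((1 - εbar) * S0.card) + Real.sqrt (εbar * S0ᶜ.card))
    (πε : S → ℝ)
    (hπε : ∀ g, πε g = if g ∈ S0 then Real.sqrt ((1 - εbar) / S0.card) / Z
        else Real.sqrt (εbar / S0ᶜ.card) / Z)
    (q' : S → ℝ) (hq'1 : ∑ g, q' g = 1)
    (hTV : (1 / 2) * ∑ g, |pD g - q' g| ≤ ε) :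
    ∑ g, q' g / πε g ≤ ∑ g, qε g / πε g := by
  have hn0 : (0 : ℝ) < S0.card := by exact_mod_cast hS0.card_pos
  have hn1 : (0 : ℝ) < S0ᶜ.card := by exact_mod_cast hS1.card_pos
  have hcard : (Fintype.card S : ℝ) = S0.card + S0ᶜ.card := mod_cast S0.card_add_card_compl.symm
  have hZpos : 0 < Z := by rw [hZ]; positivity
  set a := Real.sqrt ((1 - εbar) / S0.card) / Z
  set b := Real.sqrt (εbar / S0ᶜ.card) / Z
  have hb : 0 < b := div_pos (Real.sqrt_pos.2 (div_pos hpos hn1)) hZpos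
  have hba : b ≤ a := by
    refine div_le_div_of_nonneg_right (Real.sqrt_le_sqrt ?_) hZpos.le
    rw [div_le_one_sub_div_iff hn0 hn1, ← hcard, hεbar]
    exact min_le_right _ _
  obtain ⟨hqε0, hqε1⟩ := sum_eq_and_sum_compl_eq_of_eq_ite hS0 hS1 hqε
  obtain ⟨hpD0, hpD1⟩ := sum_eq_and_sum_compl_eq_of_eq_ite hS0 hS1 hpD
  have hmass : ∑ g ∈ S0ᶜ, q' g ≤ ε + β := by
    have hsum : ∑ g, pD g = ∑ g, q' g := by
      rw [hq'1, ← sum_add_sum_compl S0, hpD0, hpD1, sub_add_cancel]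
    linarith [sum_le_sum_add_half_sum_abs_sub S0ᶜ hsum]
  have hcases : ∑ g ∈ S0ᶜ, q' g ≤ εbar ∨ a = b := by
    rcases min_choice (ε + β) ((S0ᶜ.card : ℝ) / Fintype.card S) with h | h
    · exact Or.inl (by rw [hεbar, h]; exact hmass)
    · refine Or.inr (congrArg (· / Z) (congrArg Real.sqrt ?_))
      rw [hεbar, h, hcard]
      exact one_sub_div_add_div_div_eq hn0.ne' hn1.ne' (add_pos hn0 hn1).ne'
  have hq'S0 : ∑ g ∈ S0, q' g = 1 - ∑ g ∈ S0ᶜ, q' g :=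
    eq_sub_of_add_eq (by rw [sum_add_sum_compl, hq'1])
  rw [funext hπε, sum_div_ite_mem, sum_div_ite_mem, hqε0, hqε1, hq'S0]
  exact sub_div_add_div_le_sub_div_add_div hb hba hcases

/-- With `0 < ε̄ < 1`, for every task distribution `q'` within total-variation distance `ε`
of the training distribution `p_D`, the regret of the ε-robust meta-policy `π^ε` on `q'`
is at most its regret on the perturbed distribution `q^ε`: `q^ε` is worst-case for `π^ε`
within the TV ε-ball around `p_D`. -/
theorem stmt_7 {S : Type*} [Fintype S] [DecidableEq S] [Nonempty S]
    (S0 : Finset S) (hS0 : S0.Nonempty) (hS1 : S0ᶜ.Nonempty)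
    (β ε : ℝ) (hβ0 : 0 ≤ β) (hβ1 : β ≤ 1) (hε : 0 ≤ ε)
    (εbar : ℝ) (hεbar : εbar = min (ε + β) ((S0ᶜ.card : ℝ) / Fintype.card S))
    (hpos : 0 < εbar) (hlt : εbar < 1)
    (pD qε : S → ℝ)
    (hpD : ∀ g, pD g = if g ∈ S0 then (1 - β) / S0.card else β / S0ᶜ.card)
    (hqε : ∀ g, qε g = if g ∈ S0 then (1 - εbar) / S0.card else εbar / S0ᶜ.card)
    (Z : ℝ) (hZ : Z = Real.sqrt ((1 - εbar) * S0.card) + Real.sqrt (εbar * S0ᶜ.card))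
    (πε : S → ℝ)
    (hπε : ∀ g, πε g = if g ∈ S0 then Real.sqrt ((1 - εbar) / S0.card) / Z
        else Real.sqrt (εbar / S0ᶜ.card) / Z)
    (q' : S → ℝ) (hq'0 : ∀ g, 0 ≤ q' g) (hq'1 : ∑ g, q' g = 1)
    (hTV : (1 / 2) * ∑ g, |pD g - q' g| ≤ ε) :
    ∑ g, q' g / πε g ≤ ∑ g, qε g / πε g :=
  stmt_7_general S0 hS0 hS1 β ε εbar hεbar hpos pD qε hpD hqε Z hZ πε hπε q' hq'1 hTV
end

section
/- Suppose 0 < ε̄ < 1. The ε-robust meta-policy π^ε is exactly the regret-optimal meta-policy for the task distribution q^ε: π^ε(g) = √(q^ε(g)) / ∑_{g'∈𝒮} √(q^ε(g')) for every g ∈ 𝒮, and consequently Regret(π, q^ε) ≥ Regret(π^ε, q^ε) = Z_ε² for every meta-policy π with π(g) > 0 for all g. -/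
/-!
By Cauchy–Schwarz, `(∑ √q)² ≤ (∑ q / π) (∑ π) = ∑ q / π` for every positive meta-policy `π`,
and the square-root policy `π = √q / ∑ √q` attains this bound. For the two-level distribution
`q^ε` the sum `∑ √(q^ε)` is `Z_ε`, which identifies `π^ε` with the square-root policy.
-/

open Finset

theorem sq_sum_sqrt_le_sum_div {ι : Type*} (s : Finset ι) {q π : ι → ℝ}
    (hq : ∀ i ∈ s, 0 ≤ q i) (hπ : ∀ i ∈ s, 0 < π i) (hπ_sum : ∑ i ∈ s, π i = 1) :
    (∑ i ∈ s, √(q i)) ^ 2 ≤ ∑ i ∈ s, q i / π i := by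
  calc (∑ i ∈ s, √(q i)) ^ 2 = (∑ i ∈ s, √(q i)) ^ 2 / ∑ i ∈ s, π i := by rw [hπ_sum, div_one]
    _ ≤ ∑ i ∈ s, √(q i) ^ 2 / π i := sq_sum_div_le_sum_sq_div s _ hπ
    _ = ∑ i ∈ s, q i / π i := sum_congr rfl fun i hi => by rw [Real.sq_sqrt (hq i hi)]

theorem sum_div_sqrt_div_sum_sqrt {ι : Type*} (s : Finset ι) (q : ι → ℝ) :
    ∑ i ∈ s, q i / (√(q i) / ∑ j ∈ s, √(q j)) = (∑ i ∈ s, √(q i)) ^ 2 := by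
  simp_rw [div_div_eq_mul_div, mul_comm (q _), mul_div_assoc, Real.div_sqrt, ← mul_sum, sq]

theorem mul_sqrt_div_self {x c : ℝ} (hc : 0 ≤ c) : c * √(x / c) = √(x * c) := by
  rcases hc.eq_or_lt with rfl | hc
  · simp
  rw [← Real.sqrt_sq hc.le, ← Real.sqrt_mul (sq_nonneg c), Real.sqrt_sq hc.le]
  congr 1
  field_simp

theorem sum_sqrt_ite_div_card {S : Type*} [Fintype S] [DecidableEq S] (s : Finset S)
    (a b : ℝ) :
    ∑ g, √(if g ∈ s then a / s.card else b / sᶜ.card) = √(a * s.card) + √(b * sᶜ.card) := by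
  simp_rw [apply_ite Real.sqrt]
  rw [sum_ite, sum_const, sum_const, filter_mem_eq_inter, univ_inter, filter_not,
    filter_mem_eq_inter, univ_inter, ← compl_eq_univ_sdiff, nsmul_eq_mul, nsmul_eq_mul,
    mul_sqrt_div_self (Nat.cast_nonneg _), mul_sqrt_div_self (Nat.cast_nonneg _)]

theorem stmt_8_general {S : Type*} [Fintype S] [DecidableEq S]
    (S0 : Finset S)
    (εbar : ℝ)
    (hpos : 0 < εbar) (hlt : εbar < 1)
    (qε : S → ℝ)
    (hqε : ∀ g, qε g = if g ∈ S0 then (1 - εbar) / S0.card else εbar / S0ᶜ.card)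
    (Z : ℝ) (hZ : Z = Real.sqrt ((1 - εbar) * S0.card) + Real.sqrt (εbar * S0ᶜ.card))
    (πε : S → ℝ)
    (hπε : ∀ g, πε g = if g ∈ S0 then Real.sqrt ((1 - εbar) / S0.card) / Z
        else Real.sqrt (εbar / S0ᶜ.card) / Z) :
    (∀ g, πε g = Real.sqrt (qε g) / ∑ g', Real.sqrt (qε g')) ∧
    (∀ π : S → ℝ, (∀ g, 0 < π g) → (∑ g, π g = 1) →
      ∑ g, qε g / πε g ≤ ∑ g, qε g / π g) ∧
    ∑ g, qε g / πε g = Z ^ 2 := by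
  have hq : ∀ g, 0 ≤ qε g := fun g => by
    rw [hqε g]; split_ifs <;> apply div_nonneg <;> linarith
  have hsum : ∑ g, √(qε g) = Z := by
    simp_rw [hqε, hZ]
    exact sum_sqrt_ite_div_card S0 _ _
  have hπ_sqrt : ∀ g, πε g = √(qε g) / ∑ g', √(qε g') := fun g => by
    rw [hsum, hπε g, hqε g, apply_ite Real.sqrt, ite_div]
  have hregret : ∑ g, qε g / πε g = Z ^ 2 := by
    simp_rw [hπ_sqrt, sum_div_sqrt_div_sum_sqrt, hsum]
  refine ⟨hπ_sqrt, fun π hπ hπ_sum => ?_, hregret⟩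
  rw [hregret, ← hsum]
  exact sq_sum_sqrt_le_sum_div univ (fun g _ => hq g) (fun g _ => hπ g) hπ_sum

/-- With `0 < ε̄ < 1`, the ε-robust meta-policy `π^ε` is exactly the regret-optimal
meta-policy for the perturbed distribution `q^ε`: `π^ε g = √(q^ε g) / ∑ √(q^ε g')`,
and consequently every positive meta-policy `π` satisfies
`Regret(π, q^ε) ≥ Regret(π^ε, q^ε) = Z_ε²`. -/
theorem stmt_8 {S : Type*} [Fintype S] [DecidableEq S] [Nonempty S]
    (S0 : Finset S) (hS0 : S0.Nonempty) (hS1 : S0ᶜ.Nonempty)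
    (β ε : ℝ) (hβ0 : 0 ≤ β) (hβ1 : β ≤ 1) (hε : 0 ≤ ε)
    (εbar : ℝ) (hεbar : εbar = min (ε + β) ((S0ᶜ.card : ℝ) / Fintype.card S))
    (hpos : 0 < εbar) (hlt : εbar < 1)
    (qε : S → ℝ)
    (hqε : ∀ g, qε g = if g ∈ S0 then (1 - εbar) / S0.card else εbar / S0ᶜ.card)
    (Z : ℝ) (hZ : Z = Real.sqrt ((1 - εbar) * S0.card) + Real.sqrt (εbar * S0ᶜ.card))
    (πε : S → ℝ)
    (hπε : ∀ g, πε g = if g ∈ S0 then Real.sqrt ((1 - εbar) / S0.card) / Z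
        else Real.sqrt (εbar / S0ᶜ.card) / Z) :
    (∀ g, πε g = Real.sqrt (qε g) / ∑ g', Real.sqrt (qε g')) ∧
    (∀ π : S → ℝ, (∀ g, 0 < π g) → (∑ g, π g = 1) →
      ∑ g, qε g / πε g ≤ ∑ g, qε g / π g) ∧
    ∑ g, qε g / πε g = Z ^ 2 :=
  stmt_8_general S0 εbar hpos hlt qε hqε Z hZ πε hπε
end

section
/- Suppose 0 < ε̄₁ < 1 and 0 < ε̄₂ < 1, where ε̄ᵢ = min{εᵢ + β, |𝒮₁|/|𝒮|}, and let c = √( (ε̄₂⁻¹ − 1)/(ε̄₁⁻¹ − 1) ). Then the regret of the ε₂-robust meta-policy π^{ε₂} on the perturbed task distribution q^{ε₁} is Regret(π^{ε₂}, q^{ε₁}) = (1−ε̄₁)|𝒮₀| + ε̄₁|𝒮₁| + √( ε̄₁(1−ε̄₁)|𝒮₀||𝒮₁| ) · ( c + 1/c ). -/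
/-!
Both `q^{ε₁}` and `π^{ε₂}` are constant on `S0` and on its complement, so the regret collapses to
`|S0| q₀/π₀ + |S1| q₁/π₁`. Once the square roots `√(1-ε̄₂), √ε̄₂, √ε̄₁, √(1-ε̄₁), √|S0|, √|S1|` are
given names, `Z₂`, `c` and the cross term are monomials in them, and the claim is a rational
identity in six positive unknowns.
-/

theorem Finset.sum_ite_mem_const {α M : Type*} [Fintype α] [DecidableEq α] [AddCommMonoid M]
    (s : Finset α) (a b : M) :
    ∑ g, (if g ∈ s then a else b) = s.card • a + sᶜ.card • b := by
  rw [Finset.sum_ite]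
  simp [Finset.filter_not, Finset.compl_eq_univ_sdiff]

theorem inv_sub_one_eq_one_sub_div {x : ℝ} (hx : x ≠ 0) : x⁻¹ - 1 = (1 - x) / x := by
  field_simp

theorem sqrt_inv_sub_one_div_inv_sub_one {x y : ℝ} (hx : 0 < x) (hy0 : 0 < y) (hy1 : y < 1) :
    √((y⁻¹ - 1) / (x⁻¹ - 1)) = √(1 - y) * √x / (√y * √(1 - x)) := by
  rw [inv_sub_one_eq_one_sub_div hx.ne', inv_sub_one_eq_one_sub_div hy0.ne', div_div_div_eq,
    Real.sqrt_div (mul_nonneg (sub_nonneg.2 hy1.le) hx.le), Real.sqrt_mul (sub_nonneg.2 hy1.le),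
    Real.sqrt_mul hy0.le]

theorem two_level_regret_eq_of_sqrt {p q r s u v : ℝ} (hp : 0 < p) (hq : 0 < q) (hr : 0 < r)
    (hs : 0 < s) (hu : 0 < u) (hv : 0 < v) :
    u ^ 2 * (s ^ 2 / u ^ 2 / (p / u / (p * u + q * v))) +
        v ^ 2 * (r ^ 2 / v ^ 2 / (q / v / (p * u + q * v))) =
      s ^ 2 * u ^ 2 + r ^ 2 * v ^ 2 +
        r * s * u * v * (p * r / (q * s) + 1 / (p * r / (q * s))) := by
  have hZ : p * u + q * v ≠ 0 := by positivity
  field_simp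
  ring

theorem two_level_regret_eq {n₀ n₁ e₁ e₂ : ℝ} (hn₀ : 0 < n₀) (hn₁ : 0 < n₁)
    (he₁0 : 0 < e₁) (he₁1 : e₁ < 1) (he₂0 : 0 < e₂) (he₂1 : e₂ < 1) :
    n₀ * ((1 - e₁) / n₀ / (√((1 - e₂) / n₀) / (√((1 - e₂) * n₀) + √(e₂ * n₁)))) +
        n₁ * (e₁ / n₁ / (√(e₂ / n₁) / (√((1 - e₂) * n₀) + √(e₂ * n₁)))) =
      (1 - e₁) * n₀ + e₁ * n₁ +
        √(e₁ * (1 - e₁) * n₀ * n₁) *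
          (√((e₂⁻¹ - 1) / (e₁⁻¹ - 1)) + 1 / √((e₂⁻¹ - 1) / (e₁⁻¹ - 1))) := by
  have h₁ : 0 < 1 - e₁ := sub_pos.2 he₁1
  have h₂ : 0 < 1 - e₂ := sub_pos.2 he₂1
  have key := two_level_regret_eq_of_sqrt (Real.sqrt_pos.2 h₂) (Real.sqrt_pos.2 he₂0)
    (Real.sqrt_pos.2 he₁0) (Real.sqrt_pos.2 h₁) (Real.sqrt_pos.2 hn₀) (Real.sqrt_pos.2 hn₁)
  rw [Real.sq_sqrt h₁.le, Real.sq_sqrt he₁0.le, Real.sq_sqrt hn₀.le, Real.sq_sqrt hn₁.le] at key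
  rw [Real.sqrt_div h₂.le, Real.sqrt_div he₂0.le, Real.sqrt_mul h₂.le, Real.sqrt_mul he₂0.le,
    Real.sqrt_mul (by positivity), Real.sqrt_mul (by positivity), Real.sqrt_mul he₁0.le,
    sqrt_inv_sub_one_div_inv_sub_one he₁0 he₂0 he₂1]
  exact key

theorem stmt_12_general {S : Type*} [Fintype S] [DecidableEq S]
    (S0 : Finset S) (hS0 : S0.Nonempty) (hS1 : S0ᶜ.Nonempty)
    (εbar1 εbar2 : ℝ)
    (hpos1 : 0 < εbar1) (hlt1 : εbar1 < 1)
    (hpos2 : 0 < εbar2) (hlt2 : εbar2 < 1)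
    (c : ℝ) (hc : c = Real.sqrt ((εbar2⁻¹ - 1) / (εbar1⁻¹ - 1)))
    (qε1 : S → ℝ)
    (hqε1 : ∀ g, qε1 g = if g ∈ S0 then (1 - εbar1) / S0.card else εbar1 / S0ᶜ.card)
    (Z2 : ℝ) (hZ2 : Z2 = Real.sqrt ((1 - εbar2) * S0.card) + Real.sqrt (εbar2 * S0ᶜ.card))
    (πε2 : S → ℝ)
    (hπε2 : ∀ g, πε2 g = if g ∈ S0 then Real.sqrt ((1 - εbar2) / S0.card) / Z2
        else Real.sqrt (εbar2 / S0ᶜ.card) / Z2) :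
    ∑ g, qε1 g / πε2 g =
      (1 - εbar1) * S0.card + εbar1 * S0ᶜ.card +
        Real.sqrt (εbar1 * (1 - εbar1) * S0.card * S0ᶜ.card) * (c + 1 / c) := by
  simp only [hqε1, hπε2, ite_div_ite, Finset.sum_ite_mem_const, nsmul_eq_mul]
  subst hc hZ2
  exact two_level_regret_eq (by exact_mod_cast hS0.card_pos) (by exact_mod_cast hS1.card_pos)
    hpos1 hlt1 hpos2 hlt2

/-- With `0 < ε̄₁ < 1` and `0 < ε̄₂ < 1`, setting `c = √((ε̄₂⁻¹ - 1)/(ε̄₁⁻¹ - 1))`,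
the regret of the ε₂-robust meta-policy on the perturbed distribution `q^{ε₁}` is
`(1-ε̄₁)|S0| + ε̄₁|S1| + √(ε̄₁(1-ε̄₁)|S0||S1|)·(c + 1/c)`. -/
theorem stmt_12 {S : Type*} [Fintype S] [DecidableEq S] [Nonempty S]
    (S0 : Finset S) (hS0 : S0.Nonempty) (hS1 : S0ᶜ.Nonempty)
    (β ε1 ε2 : ℝ) (hβ0 : 0 ≤ β) (hβ1 : β ≤ 1) (hε1 : 0 ≤ ε1) (hε2 : 0 ≤ ε2)
    (εbar1 εbar2 : ℝ)
    (hεbar1 : εbar1 = min (ε1 + β) ((S0ᶜ.card : ℝ) / Fintype.card S))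
    (hεbar2 : εbar2 = min (ε2 + β) ((S0ᶜ.card : ℝ) / Fintype.card S))
    (hpos1 : 0 < εbar1) (hlt1 : εbar1 < 1)
    (hpos2 : 0 < εbar2) (hlt2 : εbar2 < 1)
    (c : ℝ) (hc : c = Real.sqrt ((εbar2⁻¹ - 1) / (εbar1⁻¹ - 1)))
    (qε1 : S → ℝ)
    (hqε1 : ∀ g, qε1 g = if g ∈ S0 then (1 - εbar1) / S0.card else εbar1 / S0ᶜ.card)
    (Z2 : ℝ) (hZ2 : Z2 = Real.sqrt ((1 - εbar2) * S0.card) + Real.sqrt (εbar2 * S0ᶜ.card))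
    (πε2 : S → ℝ)
    (hπε2 : ∀ g, πε2 g = if g ∈ S0 then Real.sqrt ((1 - εbar2) / S0.card) / Z2
        else Real.sqrt (εbar2 / S0ᶜ.card) / Z2) :
    ∑ g, qε1 g / πε2 g =
      (1 - εbar1) * S0.card + εbar1 * S0ᶜ.card +
        Real.sqrt (εbar1 * (1 - εbar1) * S0.card * S0ᶜ.card) * (c + 1 / c) :=
  stmt_12_general S0 hS0 hS1 εbar1 εbar2 hpos1 hlt1 hpos2 hlt2 c hc qε1 hqε1 Z2 hZ2 πε2 hπε2
end

section
/- Suppose 0 < ε̄₁ < 1 and 0 < ε̄₂ < 1, where ε̄ᵢ = min{εᵢ + β, |𝒮₁|/|𝒮|}, and let c = √( (ε̄₂⁻¹ − 1)/(ε̄₁⁻¹ − 1) ). Then the excess regret of the ε₂-robust meta-policy over the ε₁-robust meta-policy on the task distribution q^{ε₁} is exactly Regret(π^{ε₂}, q^{ε₁}) − Regret(π^{ε₁}, q^{ε₁}) = ( c + 1/c − 2 ) · √( ε̄₁(1−ε̄₁)|𝒮₀||𝒮₁| ). -/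
/-!
Both meta-policies and `q^{ε₁}` are constant on `𝒮₀` and on `𝒮₁`, so with `a = |𝒮₀|`, `b = |𝒮₁|`,
and `ε`, `δ` standing for `ε̄₁`, `ε̄₂`, one gets `Regret(π^δ, q^ε) = Z_δ · ((1 - ε)√a / √(1 - δ) + ε√b / √δ)`, and in particular
`Regret(π^ε, q^ε) = Z_ε²`. Expanding the products, the terms `(1 - ε)a + εb` cancel and the
difference is `√(ab) · ((1 - ε)√(δ/(1 - δ)) + ε√((1 - δ)/δ) - 2√(ε(1 - ε)))`, which is
`(1/c + c - 2) · √(ε(1 - ε)ab)`.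
-/

open Finset Real

theorem sum_ite_div_ite {S : Type*} [Fintype S] [DecidableEq S] (s : Finset S) (x y u v : ℝ) :
    ∑ g, (if g ∈ s then x else y) / (if g ∈ s then u else v) =
      s.card * (x / u) + sᶜ.card * (y / v) := by
  rw [← sum_add_sum_compl s, sum_congr rfl fun g (hg : g ∈ s) => by rw [if_pos hg, if_pos hg],
    sum_congr rfl fun g (hg : g ∈ sᶜ) => by rw [if_neg (mem_compl.1 hg), if_neg (mem_compl.1 hg)],
    sum_const, sum_const, nsmul_eq_mul, nsmul_eq_mul]

/-- The left side is `Regret(π^δ, q^ε)` summed block by block, with `a = |𝒮₀|` and `b = |𝒮₁|`. -/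
theorem regret_robustPolicy_eq {a b ε δ : ℝ} (ha : 0 < a) (hb : 0 < b) (hδ0 : 0 < δ)
    (hδ1 : δ < 1) :
    a * ((1 - ε) / a / (√((1 - δ) / a) / (√((1 - δ) * a) + √(δ * b)))) +
        b * (ε / b / (√(δ / b) / (√((1 - δ) * a) + √(δ * b)))) =
      (√(1 - δ) * √a + √δ * √b) * ((1 - ε) * √a / √(1 - δ) + ε * √b / √δ) := by
  have h1δ : 0 < 1 - δ := by linarith
  rw [sqrt_div h1δ.le, sqrt_div hδ0.le, sqrt_mul h1δ.le, sqrt_mul hδ0.le]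
  have := sq_sqrt ha.le
  have := sq_sqrt hb.le
  have := sqrt_pos.2 ha
  have := sqrt_pos.2 hb
  have := sqrt_pos.2 hδ0
  have := sqrt_pos.2 h1δ
  field_simp

theorem sqrt_inv_sub_one_div_inv_sub_one_s13 {ε δ : ℝ} (hε0 : 0 < ε) (hε1 : ε < 1) (hδ0 : 0 < δ)
    (hδ1 : δ < 1) :
    √((δ⁻¹ - 1) / (ε⁻¹ - 1)) = √(1 - δ) * √ε / (√δ * √(1 - ε)) := by
  have h1ε : 0 < 1 - ε := by linarith
  have h1δ : 0 < 1 - δ := by linarith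
  rw [← sqrt_mul (by linarith), ← sqrt_mul hδ0.le, ← sqrt_div (by positivity)]
  congr 1
  field_simp

theorem excess_regret_eq {ε δ : ℝ} (hε0 : 0 < ε) (hε1 : ε < 1) (hδ0 : 0 < δ) (hδ1 : δ < 1)
    (x y : ℝ) :
    (√(1 - δ) * x + √δ * y) * ((1 - ε) * x / √(1 - δ) + ε * y / √δ) -
        (√(1 - ε) * x + √ε * y) * ((1 - ε) * x / √(1 - ε) + ε * y / √ε) =
      (√(1 - δ) * √ε / (√δ * √(1 - ε)) + 1 / (√(1 - δ) * √ε / (√δ * √(1 - ε))) - 2) *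
        (√ε * √(1 - ε) * x * y) := by
  have hs : 0 < √ε := sqrt_pos.2 hε0
  have ht : 0 < √(1 - ε) := sqrt_pos.2 (by linarith)
  have hs' : 0 < √δ := sqrt_pos.2 hδ0
  have ht' : 0 < √(1 - δ) := sqrt_pos.2 (by linarith)
  have hε : ε = √ε ^ 2 := (sq_sqrt hε0.le).symm
  have h1ε : 1 - ε = √(1 - ε) ^ 2 := (sq_sqrt (by linarith)).symm
  generalize √ε = s, √(1 - ε) = t, √δ = s', √(1 - δ) = t' at *
  subst hε
  rw [h1ε]
  field_simp
  ring

theorem stmt_13_general {S : Type*} [Fintype S] [DecidableEq S]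
    (S0 : Finset S) (hS0 : S0.Nonempty) (hS1 : S0ᶜ.Nonempty)
    (εbar1 εbar2 : ℝ)
    (hpos1 : 0 < εbar1) (hlt1 : εbar1 < 1)
    (hpos2 : 0 < εbar2) (hlt2 : εbar2 < 1)
    (c : ℝ) (hc : c = Real.sqrt ((εbar2⁻¹ - 1) / (εbar1⁻¹ - 1)))
    (qε1 : S → ℝ)
    (hqε1 : ∀ g, qε1 g = if g ∈ S0 then (1 - εbar1) / S0.card else εbar1 / S0ᶜ.card)
    (Z1 : ℝ) (hZ1 : Z1 = Real.sqrt ((1 - εbar1) * S0.card) + Real.sqrt (εbar1 * S0ᶜ.card))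
    (Z2 : ℝ) (hZ2 : Z2 = Real.sqrt ((1 - εbar2) * S0.card) + Real.sqrt (εbar2 * S0ᶜ.card))
    (πε1 : S → ℝ)
    (hπε1 : ∀ g, πε1 g = if g ∈ S0 then Real.sqrt ((1 - εbar1) / S0.card) / Z1
        else Real.sqrt (εbar1 / S0ᶜ.card) / Z1)
    (πε2 : S → ℝ)
    (hπε2 : ∀ g, πε2 g = if g ∈ S0 then Real.sqrt ((1 - εbar2) / S0.card) / Z2
        else Real.sqrt (εbar2 / S0ᶜ.card) / Z2) :
    (∑ g, qε1 g / πε2 g) - (∑ g, qε1 g / πε1 g) =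
      (c + 1 / c - 2) * Real.sqrt (εbar1 * (1 - εbar1) * S0.card * S0ᶜ.card) := by
  have ha : (0 : ℝ) < S0.card := by exact_mod_cast hS0.card_pos
  have hb : (0 : ℝ) < S0ᶜ.card := by exact_mod_cast hS1.card_pos
  have h1ε : 0 ≤ 1 - εbar1 := by linarith
  simp only [hqε1, hπε1, hπε2, hZ1, hZ2, sum_ite_div_ite]
  rw [regret_robustPolicy_eq ha hb hpos1 hlt1, regret_robustPolicy_eq ha hb hpos2 hlt2,
    excess_regret_eq hpos1 hlt1 hpos2 hlt2, hc,
    sqrt_inv_sub_one_div_inv_sub_one_s13 hpos1 hlt1 hpos2 hlt2,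
    sqrt_mul (by positivity), sqrt_mul (by positivity), sqrt_mul hpos1.le]

/-- With `0 < ε̄₁ < 1` and `0 < ε̄₂ < 1`, setting `c = √((ε̄₂⁻¹ - 1)/(ε̄₁⁻¹ - 1))`,
the excess regret of the ε₂-robust meta-policy over the ε₁-robust meta-policy on the
task distribution `q^{ε₁}` is exactly `(c + 1/c - 2)·√(ε̄₁(1-ε̄₁)|S0||S1|)`. -/
theorem stmt_13 {S : Type*} [Fintype S] [DecidableEq S] [Nonempty S]
    (S0 : Finset S) (hS0 : S0.Nonempty) (hS1 : S0ᶜ.Nonempty)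
    (β ε1 ε2 : ℝ) (hβ0 : 0 ≤ β) (hβ1 : β ≤ 1) (hε1 : 0 ≤ ε1) (hε2 : 0 ≤ ε2)
    (εbar1 εbar2 : ℝ)
    (hεbar1 : εbar1 = min (ε1 + β) ((S0ᶜ.card : ℝ) / Fintype.card S))
    (hεbar2 : εbar2 = min (ε2 + β) ((S0ᶜ.card : ℝ) / Fintype.card S))
    (hpos1 : 0 < εbar1) (hlt1 : εbar1 < 1)
    (hpos2 : 0 < εbar2) (hlt2 : εbar2 < 1)
    (c : ℝ) (hc : c = Real.sqrt ((εbar2⁻¹ - 1) / (εbar1⁻¹ - 1)))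
    (qε1 : S → ℝ)
    (hqε1 : ∀ g, qε1 g = if g ∈ S0 then (1 - εbar1) / S0.card else εbar1 / S0ᶜ.card)
    (Z1 : ℝ) (hZ1 : Z1 = Real.sqrt ((1 - εbar1) * S0.card) + Real.sqrt (εbar1 * S0ᶜ.card))
    (Z2 : ℝ) (hZ2 : Z2 = Real.sqrt ((1 - εbar2) * S0.card) + Real.sqrt (εbar2 * S0ᶜ.card))
    (πε1 : S → ℝ)
    (hπε1 : ∀ g, πε1 g = if g ∈ S0 then Real.sqrt ((1 - εbar1) / S0.card) / Z1
        else Real.sqrt (εbar1 / S0ᶜ.card) / Z1)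
    (πε2 : S → ℝ)
    (hπε2 : ∀ g, πε2 g = if g ∈ S0 then Real.sqrt ((1 - εbar2) / S0.card) / Z2
        else Real.sqrt (εbar2 / S0ᶜ.card) / Z2) :
    (∑ g, qε1 g / πε2 g) - (∑ g, qε1 g / πε1 g) =
      (c + 1 / c - 2) * Real.sqrt (εbar1 * (1 - εbar1) * S0.card * S0ᶜ.card) :=
  stmt_13_general S0 hS0 hS1 εbar1 εbar2 hpos1 hlt1 hpos2 hlt2 c hc qε1 hqε1 Z1 hZ1 Z2 hZ2 πε1 hπε1
    πε2 hπε2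
end

section
/- (Proposition 4.1) Let ε₁, ε₂ ≥ 0, set ε̄ᵢ = min{εᵢ + β, |𝒮₁|/|𝒮|}, and assume 0 < ε̄₁ < 1 and 0 < ε̄₂ < 1; let c(ε₁, ε₂) = √( (ε̄₂⁻¹ − 1)/(ε̄₁⁻¹ − 1) ). Then there exists a task distribution q on 𝒮 with D_TV(p_D, q) ≤ ε₁ such that the ε₂-robust meta-policy incurs excess regret over the ε₁-robust meta-policy: Regret(π^{ε₂}, q) − Regret(π^{ε₁}, q) ≥ ( c(ε₁,ε₂) + 1/c(ε₁,ε₂) − 2 ) · √( ε̄₁(1−ε̄₁)|𝒮₀||𝒮₁| ). -/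
/-!
Both robust policies, like every distribution in sight, are constant on `S0` and on its
complement, so every regret is a two-term expression. When `β ≤ ε̄₁` the adversary moves
`ε̄₁ - β ≤ ε₁` of mass from `S0` to `S0ᶜ`, taking `q` to be the two-block distribution with
mass `ε̄₁` off `S0`. Writing `a = √(1-ε̄₂)`, `b = √ε̄₂`, `a₁ = √(1-ε̄₁)`, `b₁ = √ε̄₁`,
`s = √|S0|`, `t = √|S0ᶜ|`, one has `Regret(π^{ε₂}, q) = (a s + b t)(a₁² s / a + b₁² t / b)` and
`Regret(π^{ε₁}, q) = (a₁ s + b₁ t)²`, whose difference is exactly `(c + 1/c - 2) a₁ b₁ s t`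
with `c = a b₁ / (b a₁)`. When `β > ε̄₁` both `ε̄ᵢ` equal the cap `|S0ᶜ|/|S|`, so the two
policies coincide, `c = 1`, and `q = p_D` works.
-/

open Finset Real

/-- The ratio `c(ε₁, ε₂)` of the proposition. -/
noncomputable def robustRatio (e₁ e₂ : ℝ) : ℝ := √((e₂⁻¹ - 1) / (e₁⁻¹ - 1))

lemma robustRatio_eq {e₁ e₂ : ℝ} (h₁0 : 0 < e₁) (h₁1 : e₁ < 1) (h₂0 : 0 < e₂) :
    robustRatio e₁ e₂ = √(1 - e₂) * √e₁ / (√e₂ * √(1 - e₁)) := by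
  have hquot : (e₂⁻¹ - 1) / (e₁⁻¹ - 1) = (1 - e₂) * e₁ / (e₂ * (1 - e₁)) := by
    have : 1 - e₁ ≠ 0 := by linarith
    field_simp
  rw [robustRatio, hquot, sqrt_div' _ (by nlinarith), sqrt_mul' _ h₁0.le, sqrt_mul' _ (by linarith)]

lemma excess_regret_identity {a b a₁ b₁ s t : ℝ} (ha : a ≠ 0) (hb : b ≠ 0) (ha₁ : a₁ ≠ 0)
    (hb₁ : b₁ ≠ 0) :
    (a * s + b * t) * (a₁ ^ 2 * s / a + b₁ ^ 2 * t / b) -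
        (a₁ * s + b₁ * t) * (a₁ ^ 2 * s / a₁ + b₁ ^ 2 * t / b₁) =
      (a * b₁ / (b * a₁) + b * a₁ / (a * b₁) - 2) * (b₁ * a₁ * s * t) := by
  field_simp
  ring

section TwoBlock

variable {S : Type*} [Fintype S] [DecidableEq S]

noncomputable def regret (pol q : S → ℝ) : ℝ := ∑ g, q g / pol g

noncomputable def tvDist (p q : S → ℝ) : ℝ := (1 / 2) * ∑ g, |p g - q g|

noncomputable def blockDist (S0 : Finset S) (x : ℝ) : S → ℝ := fun g =>
  if g ∈ S0 then (1 - x) / S0.card else x / S0ᶜ.card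

noncomputable def robustNormalizer (S0 : Finset S) (e : ℝ) : ℝ :=
  √((1 - e) * S0.card) + √(e * S0ᶜ.card)

noncomputable def robustPolicy (S0 : Finset S) (e : ℝ) : S → ℝ := fun g =>
  if g ∈ S0 then √((1 - e) / S0.card) / robustNormalizer S0 e
  else √(e / S0ᶜ.card) / robustNormalizer S0 e

lemma sum_ite_mem_univ (S0 : Finset S) (x y : ℝ) :
    ∑ g, (if g ∈ S0 then x else y) = S0.card * x + S0ᶜ.card * y := by
  rw [← sum_add_sum_compl S0, sum_congr rfl fun g hg => if_pos hg,
    sum_congr rfl fun g hg => if_neg (mem_compl.mp hg), sum_const, sum_const,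
    nsmul_eq_mul, nsmul_eq_mul]

variable {S0 : Finset S}

lemma blockDist_nonneg {x : ℝ} (hx0 : 0 ≤ x) (hx1 : x ≤ 1) (g : S) : 0 ≤ blockDist S0 x g := by
  unfold blockDist
  split_ifs <;> positivity [sub_nonneg.mpr hx1]

variable (hS0 : (S0.card : ℝ) ≠ 0) (hS1 : (S0ᶜ.card : ℝ) ≠ 0)
include hS0 hS1

lemma sum_blockDist (x : ℝ) : ∑ g, blockDist S0 x g = 1 := by
  simp only [blockDist, sum_ite_mem_univ]
  field_simp
  ring

lemma tvDist_blockDist (x y : ℝ) : tvDist (blockDist S0 x) (blockDist S0 y) = |x - y| := by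
  have hterm : ∀ g, |blockDist S0 x g - blockDist S0 y g| =
      if g ∈ S0 then |x - y| / S0.card else |x - y| / S0ᶜ.card := by
    intro g
    unfold blockDist
    split_ifs
    · rw [← sub_div, abs_div, Nat.abs_cast, sub_sub_sub_cancel_left, abs_sub_comm]
    · rw [← sub_div, abs_div, Nat.abs_cast]
  rw [tvDist, sum_congr rfl fun g _ => hterm g, sum_ite_mem_univ]
  field_simp
  ring

lemma regret_blockDist_ite (x r₀ r₁ : ℝ) :
    regret (fun g => if g ∈ S0 then r₀ else r₁) (blockDist S0 x) = (1 - x) / r₀ + x / r₁ := by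
  simp only [regret, blockDist, ite_div_ite, sum_ite_mem_univ]
  field_simp

lemma regret_robustPolicy_blockDist {e : ℝ} (he0 : 0 < e) (he1 : e < 1) (x : ℝ) :
    regret (robustPolicy S0 e) (blockDist S0 x) =
      (√(1 - e) * √S0.card + √e * √S0ᶜ.card) *
        ((1 - x) * √S0.card / √(1 - e) + x * √S0ᶜ.card / √e) := by
  have hs : √(S0.card : ℝ) ≠ 0 := sqrt_ne_zero'.mpr (by positivity)
  have ht : √(S0ᶜ.card : ℝ) ≠ 0 := sqrt_ne_zero'.mpr (by positivity)
  have ha : √(1 - e) ≠ 0 := sqrt_ne_zero'.mpr (by linarith)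
  have hb : √e ≠ 0 := sqrt_ne_zero'.mpr he0
  unfold robustPolicy
  rw [regret_blockDist_ite hS0 hS1, robustNormalizer, sqrt_mul (by linarith), sqrt_mul he0.le,
    sqrt_div (by linarith), sqrt_div he0.le]
  field_simp

lemma regret_robustPolicy_sub_regret {e₁ e₂ : ℝ} (h₁0 : 0 < e₁) (h₁1 : e₁ < 1) (h₂0 : 0 < e₂)
    (h₂1 : e₂ < 1) :
    regret (robustPolicy S0 e₂) (blockDist S0 e₁) - regret (robustPolicy S0 e₁) (blockDist S0 e₁) =
      (robustRatio e₁ e₂ + 1 / robustRatio e₁ e₂ - 2) * √(e₁ * (1 - e₁) * S0.card * S0ᶜ.card) := by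
  have key := excess_regret_identity (s := √S0.card) (t := √S0ᶜ.card)
    (sqrt_ne_zero'.mpr (by linarith : 0 < 1 - e₂)) (sqrt_ne_zero'.mpr h₂0)
    (sqrt_ne_zero'.mpr (by linarith : 0 < 1 - e₁)) (sqrt_ne_zero'.mpr h₁0)
  rw [sq_sqrt (by linarith), sq_sqrt h₁0.le] at key
  have hprod : 0 ≤ e₁ * (1 - e₁) := mul_nonneg h₁0.le (by linarith)
  rw [regret_robustPolicy_blockDist hS0 hS1 h₂0 h₂1, regret_robustPolicy_blockDist hS0 hS1 h₁0 h₁1,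
    key, robustRatio_eq h₁0 h₁1 h₂0, one_div_div, sqrt_mul (mul_nonneg hprod (Nat.cast_nonneg _)),
    sqrt_mul hprod, sqrt_mul h₁0.le]

end TwoBlock

theorem stmt_14_general {S : Type*} [Fintype S] [DecidableEq S]
    (S0 : Finset S) (hS0 : S0.Nonempty) (hS1 : S0ᶜ.Nonempty)
    (β ε1 ε2 : ℝ) (hβ0 : 0 ≤ β) (hβ1 : β ≤ 1) (hε1 : 0 ≤ ε1) (hε2 : 0 ≤ ε2)
    (pD : S → ℝ)
    (hpD : ∀ g, pD g = if g ∈ S0 then (1 - β) / S0.card else β / S0ᶜ.card)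
    (εbar1 εbar2 : ℝ)
    (hεbar1 : εbar1 = min (ε1 + β) ((S0ᶜ.card : ℝ) / Fintype.card S))
    (hεbar2 : εbar2 = min (ε2 + β) ((S0ᶜ.card : ℝ) / Fintype.card S))
    (hpos1 : 0 < εbar1) (hlt1 : εbar1 < 1)
    (hpos2 : 0 < εbar2) (hlt2 : εbar2 < 1)
    (c : ℝ) (hc : c = Real.sqrt ((εbar2⁻¹ - 1) / (εbar1⁻¹ - 1)))
    (Z1 : ℝ) (hZ1 : Z1 = Real.sqrt ((1 - εbar1) * S0.card) + Real.sqrt (εbar1 * S0ᶜ.card))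
    (Z2 : ℝ) (hZ2 : Z2 = Real.sqrt ((1 - εbar2) * S0.card) + Real.sqrt (εbar2 * S0ᶜ.card))
    (πε1 : S → ℝ)
    (hπε1 : ∀ g, πε1 g = if g ∈ S0 then Real.sqrt ((1 - εbar1) / S0.card) / Z1
        else Real.sqrt (εbar1 / S0ᶜ.card) / Z1)
    (πε2 : S → ℝ)
    (hπε2 : ∀ g, πε2 g = if g ∈ S0 then Real.sqrt ((1 - εbar2) / S0.card) / Z2
        else Real.sqrt (εbar2 / S0ᶜ.card) / Z2) :
    ∃ q : S → ℝ, (∀ g, 0 ≤ q g) ∧ (∑ g, q g = 1) ∧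
      (1 / 2) * (∑ g, |pD g - q g|) ≤ ε1 ∧
      (c + 1 / c - 2) * Real.sqrt (εbar1 * (1 - εbar1) * S0.card * S0ᶜ.card) ≤
        (∑ g, q g / πε2 g) - (∑ g, q g / πε1 g) := by
  have hn0 : (S0.card : ℝ) ≠ 0 := by exact_mod_cast hS0.card_pos.ne'
  have hn1 : (S0ᶜ.card : ℝ) ≠ 0 := by exact_mod_cast hS1.card_pos.ne'
  subst hZ1 hZ2
  obtain rfl : pD = blockDist S0 β := funext hpD
  obtain rfl : πε1 = robustPolicy S0 εbar1 := funext hπε1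
  obtain rfl : πε2 = robustPolicy S0 εbar2 := funext hπε2
  subst hc
  obtain hβ | hβ := le_or_gt β εbar1
  · refine ⟨blockDist S0 εbar1, blockDist_nonneg hpos1.le hlt1.le, sum_blockDist hn0 hn1 _, ?_,
      (regret_robustPolicy_sub_regret hn0 hn1 hpos1 hlt1 hpos2 hlt2).ge⟩
    have hε1β : εbar1 ≤ ε1 + β := hεbar1 ▸ min_le_left _ _
    change tvDist _ _ ≤ _
    rw [tvDist_blockDist hn0 hn1, abs_of_nonpos (by linarith)]
    linarith
  · have hcap : (S0ᶜ.card : ℝ) / Fintype.card S < β :=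
      (min_lt_iff.mp (hεbar1 ▸ hβ)).resolve_left (by linarith)
    have hεbar : εbar2 = εbar1 := by
      rw [hεbar1, hεbar2, min_eq_right (by linarith), min_eq_right (by linarith)]
    have hinv : εbar1⁻¹ - 1 ≠ 0 := sub_ne_zero.mpr ((one_lt_inv₀ hpos1).mpr hlt1).ne'
    refine ⟨blockDist S0 β, blockDist_nonneg hβ0 hβ1, sum_blockDist hn0 hn1 _, ?_, ?_⟩
    · simpa using hε1
    · rw [hεbar, div_self hinv, sqrt_one, sub_self]
      norm_num

/-- (Proposition 4.1) With `ε̄ᵢ = min (εᵢ + β) (|S1|/|S|)` satisfying `0 < ε̄ᵢ < 1` and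
`c = √((ε̄₂⁻¹ - 1)/(ε̄₁⁻¹ - 1))`, there exists a task distribution `q` within total-variation
distance `ε₁` of the training distribution `p_D` on which the ε₂-robust meta-policy incurs
excess regret at least `(c + 1/c - 2)·√(ε̄₁(1-ε̄₁)|S0||S1|)` over the ε₁-robust meta-policy. -/
theorem stmt_14 {S : Type*} [Fintype S] [DecidableEq S] [Nonempty S]
    (S0 : Finset S) (hS0 : S0.Nonempty) (hS1 : S0ᶜ.Nonempty)
    (β ε1 ε2 : ℝ) (hβ0 : 0 ≤ β) (hβ1 : β ≤ 1) (hε1 : 0 ≤ ε1) (hε2 : 0 ≤ ε2)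
    (pD : S → ℝ)
    (hpD : ∀ g, pD g = if g ∈ S0 then (1 - β) / S0.card else β / S0ᶜ.card)
    (εbar1 εbar2 : ℝ)
    (hεbar1 : εbar1 = min (ε1 + β) ((S0ᶜ.card : ℝ) / Fintype.card S))
    (hεbar2 : εbar2 = min (ε2 + β) ((S0ᶜ.card : ℝ) / Fintype.card S))
    (hpos1 : 0 < εbar1) (hlt1 : εbar1 < 1)
    (hpos2 : 0 < εbar2) (hlt2 : εbar2 < 1)
    (c : ℝ) (hc : c = Real.sqrt ((εbar2⁻¹ - 1) / (εbar1⁻¹ - 1)))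
    (Z1 : ℝ) (hZ1 : Z1 = Real.sqrt ((1 - εbar1) * S0.card) + Real.sqrt (εbar1 * S0ᶜ.card))
    (Z2 : ℝ) (hZ2 : Z2 = Real.sqrt ((1 - εbar2) * S0.card) + Real.sqrt (εbar2 * S0ᶜ.card))
    (πε1 : S → ℝ)
    (hπε1 : ∀ g, πε1 g = if g ∈ S0 then Real.sqrt ((1 - εbar1) / S0.card) / Z1
        else Real.sqrt (εbar1 / S0ᶜ.card) / Z1)
    (πε2 : S → ℝ)
    (hπε2 : ∀ g, πε2 g = if g ∈ S0 then Real.sqrt ((1 - εbar2) / S0.card) / Z2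
        else Real.sqrt (εbar2 / S0ᶜ.card) / Z2) :
    ∃ q : S → ℝ, (∀ g, 0 ≤ q g) ∧ (∑ g, q g = 1) ∧
      (1 / 2) * (∑ g, |pD g - q g|) ≤ ε1 ∧
      (c + 1 / c - 2) * Real.sqrt (εbar1 * (1 - εbar1) * S0.card * S0ᶜ.card) ≤
        (∑ g, q g / πε2 g) - (∑ g, q g / πε1 g) :=
  stmt_14_general S0 hS0 hS1 β ε1 ε2 hβ0 hβ1 hε1 hε2 pD hpD εbar1 εbar2 hεbar1 hεbar2 hpos1 hlt1
    hpos2 hlt2 c hc Z1 hZ1 Z2 hZ2 πε1 hπε1 πε2 hπε2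
end
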